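/- Let (A, μ, λ, η) be a unital coFrobenius bialgebra: μ is graded-associative with unit η, and with copairing c = (-1)^{|λ||μ|+|μ|} λη the relations λ = (1⊗μ)(c⊗1) = (-1)^{|μ|}(μ⊗1)(1⊗c) hold together with symmetry τc = (-1)^{|λ|} c. Then λ is graded-coassociative: (λ⊗1)λ = (-1)^{|λ|}(1⊗λ)λ. -/

import Mathlib

open TensorProduct LinearMap
open scoped TensorProduct DirectSum

namespace GradedCoFrob

variable {R : Type} [CommRing R] {M : Type} [AddCommGroup M] [Module R M]

/-- The Koszul sign `(-1)^n` for `n : ℤ`. -/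
def ksign (n : ℤ) : ℤ := (((-1 : ℤˣ) ^ n : ℤˣ) : ℤ)

variable (𝒜 : ℤ → Submodule R M) [DirectSum.Decomposition 𝒜]

/-- Build a linear map `M →ₗ N` out of its values on the homogeneous pieces,
bundled linearly in the family of values. -/
noncomputable def fromPiecesHom {N : Type} [AddCommGroup N] [Module R N] :
    (∀ i : ℤ, 𝒜 i →ₗ[R] N) →ₗ[R] (M →ₗ[R] N) :=
  (LinearMap.lcomp R N (DirectSum.decomposeLinearEquiv 𝒜).toLinearMap).comp
    (DFinsupp.lsum R (M := fun i => 𝒜 i) (N := N)).toLinearMap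

/-- Build a linear map `M →ₗ N` out of its values on the homogeneous pieces. -/
noncomputable def fromPieces {N : Type} [AddCommGroup N] [Module R N]
    (f : ∀ i : ℤ, 𝒜 i →ₗ[R] N) : M →ₗ[R] N :=
  fromPiecesHom 𝒜 f

/-- Build a bilinear map `M →ₗ M →ₗ N` out of its values on pairs of homogeneous pieces. -/
noncomputable def fromPieces₂ {N : Type} [AddCommGroup N] [Module R N]
    (f : ∀ i j : ℤ, 𝒜 i →ₗ[R] 𝒜 j →ₗ[R] N) : M →ₗ[R] M →ₗ[R] N :=
  fromPieces 𝒜 (fun i => (fromPiecesHom 𝒜).comp (LinearMap.pi (fun j => f i j)))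

/-- The operator multiplying the degree `i` component by the Koszul sign `(-1)^(d*i)`. -/
noncomputable def signAction (d : ℤ) : M →ₗ[R] M :=
  fromPieces 𝒜 (fun i => ksign (d * i) • (𝒜 i).subtype)

/-- The Koszul twist `τ(a ⊗ b) = (-1)^{|a||b|} b ⊗ a`. -/
noncomputable def twist : M ⊗[R] M →ₗ[R] M ⊗[R] M :=
  TensorProduct.lift (fromPieces₂ 𝒜 (fun i j =>
    ksign (i * j) • ((((TensorProduct.mk R M M).flip).comp (𝒜 i).subtype).compl₂
      (𝒜 j).subtype)))

/-- Left contraction `(f ⊗ 1)(x ⊗ y) = f(x) • y` (no Koszul sign since `1` has degree `0`). -/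
noncomputable def contrL {N : Type} [AddCommGroup N] [Module R N]
    (f : N →ₗ[R] R) : N ⊗[R] M →ₗ[R] M :=
  TensorProduct.lift ((LinearMap.lsmul R M).comp f)

/-- Right contraction with Koszul sign:
`(1 ⊗ f)(x ⊗ y) = (-1)^{d|x|} f(y) • x` where `d` is the degree of `f`. -/
noncomputable def contrR {N : Type} [AddCommGroup N] [Module R N]
    (f : N →ₗ[R] R) (d : ℤ) : M ⊗[R] N →ₗ[R] M :=
  TensorProduct.lift ((((LinearMap.lsmul R M).comp f).flip).comp (signAction 𝒜 d))

/-- Koszul-signed evaluation of a pair of functionals on a tensor: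
`(x ⊗ y) ↦ f((-1)^{d₁|x|} x) * g((-1)^{d₂|y|} y)`. -/
noncomputable def ev2 (f g : M →ₗ[R] R) (d₁ d₂ : ℤ) : M ⊗[R] M →ₗ[R] R :=
  TensorProduct.lift (((LinearMap.mul R R).comp (f.comp (signAction 𝒜 d₁))).compl₂
    (g.comp (signAction 𝒜 d₂)))

/-- The map `c⃗ : A^∨ → A`, `f ↦ (-1)^{|f||c|}(f ⊗ 1)c`, implemented by putting the sign
`(-1)^{dc |x|}` on the first tensor factor of the copairing `c` (of degree `dc`). -/
noncomputable def cvec (c : M ⊗[R] M) (dc : ℤ) : (M →ₗ[R] R) →ₗ[R] M :=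
  (LinearMap.applyₗ ((LinearMap.rTensor M (signAction 𝒜 dc)) c)).comp
    ((TensorProduct.lift.equiv (RingHom.id R) M M M).toLinearMap.comp
      (LinearMap.llcomp R M R (M →ₗ[R] M) (LinearMap.lsmul R M)))

/-- The operation `(1 ⊗ c ⊗ 1) : A ⊗ A → (A ⊗ A) ⊗ (A ⊗ A)`,
`a ⊗ b ↦ (-1)^{|c||a|} (a ⊗ c₁) ⊗ (c₂ ⊗ b)` for a copairing `c` of degree `dc`. -/
noncomputable def midIns (c : M ⊗[R] M) (dc : ℤ) :
    M ⊗[R] M →ₗ[R] (M ⊗[R] M) ⊗[R] (M ⊗[R] M) :=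
  (TensorProduct.assoc R (M ⊗[R] M) M M).toLinearMap.comp
    (LinearMap.rTensor M
      (((TensorProduct.assoc R M M M).symm.toLinearMap).comp
        (((TensorProduct.mk R M (M ⊗[R] M)).flip c).comp (signAction 𝒜 dc))))

/-- The Koszul-signed cyclic permutation `σ(a⊗b⊗c) = (-1)^{(|a|+|b|)|c|} c⊗a⊗b`. -/
noncomputable def cyc : (M ⊗[R] M) ⊗[R] M →ₗ[R] (M ⊗[R] M) ⊗[R] M :=
  (LinearMap.rTensor M (twist 𝒜)).comp
    ((TensorProduct.assoc R M M M).symm.toLinearMap.comp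
      ((LinearMap.lTensor M (twist 𝒜)).comp (TensorProduct.assoc R M M M).toLinearMap))

/-- The submodule `A_i ⊗ A_j ⊆ A ⊗ A`. -/
noncomputable def tpiece (i j : ℤ) : Submodule R (M ⊗[R] M) :=
  LinearMap.range (TensorProduct.map (𝒜 i).subtype (𝒜 j).subtype)

/-- The degree `k` part `⨁_{i+j=k} A_i ⊗ A_j` of `A ⊗ A`. -/
noncomputable def tgrade (k : ℤ) : Submodule R (M ⊗[R] M) :=
  ⨆ i : ℤ, tpiece 𝒜 i (k - i)

/-- A product is homogeneous of degree `d`. -/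
def IsHomogProd (d : ℤ) (mu : M ⊗[R] M →ₗ[R] M) : Prop :=
  ∀ i j : ℤ, ∀ x ∈ 𝒜 i, ∀ y ∈ 𝒜 j, mu (x ⊗ₜ[R] y) ∈ 𝒜 (i + j + d)

/-- A coproduct is homogeneous of degree `d`. -/
def IsHomogCoprod (d : ℤ) (lam : M →ₗ[R] M ⊗[R] M) : Prop :=
  ∀ k : ℤ, ∀ x ∈ 𝒜 k, lam x ∈ tgrade 𝒜 (k + d)

/-- A scalar-valued functional is homogeneous of degree `d`. -/
def IsHomogFun (d : ℤ) (f : M →ₗ[R] R) : Prop :=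
  ∀ i : ℤ, i ≠ -d → ∀ x ∈ 𝒜 i, f x = 0

/-- A pairing is homogeneous of degree `d`. -/
def IsHomogPairing (d : ℤ) (p : M ⊗[R] M →ₗ[R] R) : Prop :=
  ∀ i j : ℤ, i + j ≠ -d → ∀ x ∈ 𝒜 i, ∀ y ∈ 𝒜 j, p (x ⊗ₜ[R] y) = 0

end GradedCoFrob
namespace GradedCoFrob

/-- A unital coFrobenius bialgebra structure on a ℤ-graded module
(Definition `defi:coFrobenius-unital-bialgebra`), with all Koszul sign conventions explicit. -/
structure UnitalCoFrob (R : Type) [CommRing R] {M : Type} [AddCommGroup M] [Module R M]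
    (𝒜 : ℤ → Submodule R M) [DirectSum.Decomposition 𝒜] where
  mu : M ⊗[R] M →ₗ[R] M
  lam : M →ₗ[R] M ⊗[R] M
  unit : M
  dm : ℤ
  dl : ℤ
  mu_homog : IsHomogProd 𝒜 dm mu
  lam_homog : IsHomogCoprod 𝒜 dl lam
  unit_homog : unit ∈ 𝒜 (-dm)
  /-- graded associativity `μ(μ⊗1) = (-1)^{|μ|} μ(1⊗μ)` -/
  mu_assoc : mu.comp (LinearMap.rTensor M mu) =
    ksign dm • (mu.comp ((TensorProduct.map (signAction 𝒜 dm) mu).comp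
      (TensorProduct.assoc R M M M).toLinearMap))
  /-- `(-1)^{|μ|} μ(η ⊗ 1) = 1` -/
  unit_left : ksign dm • (mu.comp ((TensorProduct.mk R M M) unit)) = LinearMap.id
  /-- `μ(1 ⊗ η) = 1` -/
  unit_right : mu.comp (((TensorProduct.mk R M M).flip unit).comp (signAction 𝒜 (-dm))) =
    LinearMap.id
  cop : M ⊗[R] M
  /-- the copairing `c = (-1)^{|λ||μ|+|μ|} λη` -/
  cop_def : cop = ksign (dl * dm + dm) • lam unit
  /-- `λ = (1⊗μ)(c⊗1)` -/
  cofrob_left : lam = (TensorProduct.map (signAction 𝒜 dm) mu).comp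
    ((TensorProduct.assoc R M M M).toLinearMap.comp (TensorProduct.mk R (M ⊗[R] M) M cop))
  /-- `λ = (-1)^{|μ|}(μ⊗1)(1⊗c)` -/
  cofrob_right : lam = ksign dm • ((LinearMap.rTensor M mu).comp
    ((TensorProduct.assoc R M M M).symm.toLinearMap.comp
      (((TensorProduct.mk R M (M ⊗[R] M)).flip cop).comp (signAction 𝒜 (dl - dm)))))
  /-- `τc = (-1)^{|λ|} c` -/
  cop_symm : twist 𝒜 cop = ksign dl • cop

/-- A biunital coFrobenius bialgebra structure on a ℤ-graded module
(Definition `defi:biunital-coFrobenius-bialgebra`), with all Koszul sign conventions explicit. -/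
structure BiunitalCoFrob (R : Type) [CommRing R] {M : Type} [AddCommGroup M] [Module R M]
    (𝒜 : ℤ → Submodule R M) [DirectSum.Decomposition 𝒜] where
  mu : M ⊗[R] M →ₗ[R] M
  lam : M →ₗ[R] M ⊗[R] M
  unit : M
  counit : M →ₗ[R] R
  dm : ℤ
  dl : ℤ
  mu_homog : IsHomogProd 𝒜 dm mu
  lam_homog : IsHomogCoprod 𝒜 dl lam
  unit_homog : unit ∈ 𝒜 (-dm)
  counit_homog : IsHomogFun 𝒜 (-dl) counit
  mu_assoc : mu.comp (LinearMap.rTensor M mu) =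
    ksign dm • (mu.comp ((TensorProduct.map (signAction 𝒜 dm) mu).comp
      (TensorProduct.assoc R M M M).toLinearMap))
  /-- graded coassociativity `(λ⊗1)λ = (-1)^{|λ|}(1⊗λ)λ` -/
  lam_coassoc : (LinearMap.rTensor M lam).comp lam =
    ksign dl • ((TensorProduct.assoc R M M M).symm.toLinearMap.comp
      ((TensorProduct.map (signAction 𝒜 dl) lam).comp lam))
  unit_left : ksign dm • (mu.comp ((TensorProduct.mk R M M) unit)) = LinearMap.id
  unit_right : mu.comp (((TensorProduct.mk R M M).flip unit).comp (signAction 𝒜 (-dm))) =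
    LinearMap.id
  /-- `(ε⊗1)λ = 1` -/
  counit_left : (contrL counit).comp lam = LinearMap.id
  /-- `(-1)^{|λ|}(1⊗ε)λ = 1` -/
  counit_right : ksign dl • ((contrR 𝒜 counit (-dl)).comp lam) = LinearMap.id
  cop : M ⊗[R] M
  cop_def : cop = ksign (dl * dm + dm) • lam unit
  pr : M ⊗[R] M →ₗ[R] R
  /-- the pairing `p = (-1)^{|λ|} εμ` -/
  pr_def : pr = ksign dl • (counit.comp mu)
  cofrob_left : lam = (TensorProduct.map (signAction 𝒜 dm) mu).comp
    ((TensorProduct.assoc R M M M).toLinearMap.comp (TensorProduct.mk R (M ⊗[R] M) M cop))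
  cofrob_right : lam = ksign dm • ((LinearMap.rTensor M mu).comp
    ((TensorProduct.assoc R M M M).symm.toLinearMap.comp
      (((TensorProduct.mk R M (M ⊗[R] M)).flip cop).comp (signAction 𝒜 (dl - dm)))))
  /-- `μ = (-1)^{|μ||λ|+|λ|}(p⊗1)(1⊗λ)` -/
  cofrob_pr_left : mu = ksign (dm * dl + dl) • ((contrL pr).comp
    ((TensorProduct.assoc R M M M).symm.toLinearMap.comp
      (TensorProduct.map (signAction 𝒜 dl) lam)))
  /-- `μ = (-1)^{|μ||λ|}(1⊗p)(λ⊗1)` -/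
  cofrob_pr_right : mu = ksign (dm * dl) • ((contrR 𝒜 pr (dm - dl)).comp
    ((TensorProduct.assoc R M M M).toLinearMap.comp (LinearMap.rTensor M lam)))
  cop_symm : twist 𝒜 cop = ksign dl • cop
  /-- `pτ = (-1)^{|μ|} p` -/
  pr_symm : pr.comp (twist 𝒜) = ksign dm • pr

end GradedCoFrob

/-! Expand the outer `λ` of `(λ⊗1)λ` by `λ = ±(μ⊗1)(1⊗c)` and the inner one by
`λ = (1⊗μ)(c⊗1)`, and the other way round for `(1⊗λ)λ`. For `c = a ⊗ b` and a second copy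
`a' ⊗ b'` of `c`, this turns `(λ⊗1)λ(y)` into `± a' ⊗ μ(b' ⊗ μ(y ⊗ a)) ⊗ b` and `(1⊗λ)λ(y)` into
`± a' ⊗ μ(μ(b' ⊗ y) ⊗ a) ⊗ b`, which agree by associativity. Since `|c| = |λ| - |μ|`, the two
Koszul signs differ by `(-1)^(|λ|(|λ|+1) - |μ|(|μ|+1))`, which is `1`. -/

namespace GradedCoFrob

section

variable {R : Type} [CommRing R] {M : Type} [AddCommGroup M] [Module R M]

lemma ksign_eq_negOnePow (n : ℤ) : ksign n = n.negOnePow := rfl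

lemma ksign_add (m n : ℤ) : ksign (m + n) = ksign m * ksign n := by
  simp only [ksign_eq_negOnePow, Int.negOnePow_add, Units.val_mul]

lemma ksign_eq_ksign_iff (m n : ℤ) : ksign m = ksign n ↔ Even (m - n) := by
  rw [ksign_eq_negOnePow, ksign_eq_negOnePow, Units.val_inj, Int.negOnePow_eq_iff]

@[elab_as_elim]
lemma tgrade_induction {𝒜 : ℤ → Submodule R M} {d : ℤ} {P : M ⊗[R] M → Prop} (zero : P 0)
    (add : ∀ u v, P u → P v → P (u + v))
    (tmul : ∀ (i j : ℤ) (a b : M), a ∈ 𝒜 i → b ∈ 𝒜 j → i + j = d → P (a ⊗ₜ[R] b))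
    {c : M ⊗[R] M} (hc : c ∈ tgrade 𝒜 d) : P c := by
  refine Submodule.iSup_induction (motive := P) _ hc (fun i x hx => ?_) zero add
  obtain ⟨t, rfl⟩ := hx
  induction t with
  | zero => simpa using zero
  | tmul a b => simpa using tmul i (d - i) a b a.2 b.2 (by ring)
  | add u v hu hv => simpa using add _ _ hu hv

variable {𝒜 : ℤ → Submodule R M} [DirectSum.Decomposition 𝒜]

lemma fromPieces_of_mem {N : Type} [AddCommGroup N] [Module R N] (f : ∀ i : ℤ, 𝒜 i →ₗ[R] N)
    {i : ℤ} {x : M} (hx : x ∈ 𝒜 i) : fromPieces 𝒜 f x = f i ⟨x, hx⟩ := by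
  simp only [fromPieces, fromPiecesHom, LinearMap.comp_apply, LinearMap.lcomp_apply,
    LinearEquiv.coe_coe, DirectSum.decomposeLinearEquiv_apply, DirectSum.decompose_of_mem 𝒜 hx]
  exact DFinsupp.lsum_single R f i _

lemma signAction_of_mem {d i : ℤ} {x : M} (hx : x ∈ 𝒜 i) :
    signAction 𝒜 d x = ksign (d * i) • x := by
  rw [signAction, fromPieces_of_mem _ hx]
  rfl

namespace UnitalCoFrob

variable (U : UnitalCoFrob R 𝒜)

/-- `(1 ⊗ μ)(c ⊗ 1)`, with the copairing `c` freed so that one can induct on it. -/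
noncomputable def coprodOfCopairing (c : M ⊗[R] M) : M →ₗ[R] M ⊗[R] M :=
  (TensorProduct.map (signAction 𝒜 U.dm) U.mu).comp
    ((TensorProduct.assoc R M M M).toLinearMap.comp (TensorProduct.mk R (M ⊗[R] M) M c))

lemma lam_eq_coprodOfCopairing_cop : U.lam = U.coprodOfCopairing U.cop :=
  U.cofrob_left

lemma coprodOfCopairing_tmul_apply {i : ℤ} {a : M} (ha : a ∈ 𝒜 i) (b y : M) :
    U.coprodOfCopairing (a ⊗ₜ b) y = ksign (U.dm * i) • a ⊗ₜ[R] U.mu (b ⊗ₜ y) := by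
  simp [coprodOfCopairing, signAction_of_mem ha, ← smul_tmul']

lemma cop_mem_tgrade : U.cop ∈ tgrade 𝒜 (U.dl - U.dm) := by
  rw [U.cop_def, sub_eq_neg_add]
  exact zsmul_mem (U.lam_homog _ _ U.unit_homog) _

lemma lam_apply_of_mem {k : ℤ} {y : M} (hy : y ∈ 𝒜 k) :
    U.lam y = ksign (U.dm + (U.dl - U.dm) * k) •
      LinearMap.rTensor M U.mu ((TensorProduct.assoc R M M M).symm (y ⊗ₜ U.cop)) := by
  conv_lhs => rw [U.cofrob_right]
  simp [signAction_of_mem hy, smul_smul, ← ksign_add]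

lemma mu_mu_tmul_of_mem {j : ℤ} {b : M} (hb : b ∈ 𝒜 j) (y a : M) :
    U.mu (U.mu (b ⊗ₜ y) ⊗ₜ a) = ksign (U.dm + U.dm * j) • U.mu (b ⊗ₜ U.mu (y ⊗ₜ a)) := by
  have h := LinearMap.congr_fun U.mu_assoc ((b ⊗ₜ y) ⊗ₜ a)
  simpa [signAction_of_mem hb, ← smul_tmul', smul_smul, ← ksign_add] using h

lemma rTensor_coprodOfCopairing_tmul_comp_mu_apply {i j : ℤ} {a b : M} (ha : a ∈ 𝒜 i)
    (hb : b ∈ 𝒜 j) (y : M) (c : M ⊗[R] M) :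
    LinearMap.rTensor M (U.coprodOfCopairing (a ⊗ₜ b) ∘ₗ U.mu)
        ((TensorProduct.assoc R M M M).symm (y ⊗ₜ c)) =
      ksign (U.dm * (1 + i + j)) • (TensorProduct.assoc R M M M).symm
        (a ⊗ₜ LinearMap.rTensor M U.mu
          ((TensorProduct.assoc R M M M).symm (U.mu (b ⊗ₜ y) ⊗ₜ c))) := by
  induction c using TensorProduct.induction_on with
  | zero => simp only [TensorProduct.tmul_zero, map_zero, zsmul_zero]
  | tmul x z =>
    simp only [TensorProduct.assoc_symm_tmul, LinearMap.rTensor_tmul, LinearMap.comp_apply,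
      U.coprodOfCopairing_tmul_apply ha, U.mu_mu_tmul_of_mem hb, tmul_smul, ← smul_tmul',
      map_zsmul, smul_smul, ← ksign_add]
    congr 1
    rw [ksign_eq_ksign_iff]
    exact ⟨-(U.dm * (1 + j)), by ring⟩
  | add u v hu hv => simp only [TensorProduct.tmul_add, map_add, hu, hv, zsmul_add]

lemma assoc_symm_map_lam_coprodOfCopairing {c : M ⊗[R] M} (hc : c ∈ tgrade 𝒜 (U.dl - U.dm))
    {k : ℤ} {y : M} (hy : y ∈ 𝒜 k) :
    ksign U.dl • (TensorProduct.assoc R M M M).symm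
        (TensorProduct.map (signAction 𝒜 U.dl) U.lam (U.coprodOfCopairing c y)) =
      ksign (U.dm + (U.dl - U.dm) * k) • LinearMap.rTensor M (U.coprodOfCopairing c ∘ₗ U.mu)
        ((TensorProduct.assoc R M M M).symm (y ⊗ₜ U.cop)) := by
  refine tgrade_induction ?_ (fun u v hu hv => ?_) (fun i j a b ha hb hij => ?_) hc
  · simp [coprodOfCopairing, zsmul_zero]
  · simp only [coprodOfCopairing, LinearMap.comp_apply, TensorProduct.mk_apply] at hu hv ⊢
    simp only [TensorProduct.add_tmul, map_add, LinearMap.comp_add, LinearMap.add_comp,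
      LinearMap.rTensor_add, LinearMap.add_apply, zsmul_add, hu, hv]
  · have hby : U.mu (b ⊗ₜ y) ∈ 𝒜 (j + k + U.dm) := U.mu_homog j k b hb y hy
    rw [U.coprodOfCopairing_tmul_apply ha, U.rTensor_coprodOfCopairing_tmul_comp_mu_apply ha hb]
    simp only [map_zsmul, TensorProduct.map_tmul, signAction_of_mem ha, U.lam_apply_of_mem hby,
      tmul_smul, ← smul_tmul', smul_smul, ← ksign_add]
    congr 1
    rw [ksign_eq_ksign_iff]
    refine (congrArg Even ?_).mpr (((Int.even_mul_succ_self U.dl).sub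
      (Int.even_mul_succ_self U.dm)).sub (even_two_mul (U.dm * j)))
    linear_combination U.dl * hij

lemma rTensor_lam_lam_apply_of_mem {k : ℤ} {y : M} (hy : y ∈ 𝒜 k) :
    LinearMap.rTensor M U.lam (U.lam y) = ksign U.dl • (TensorProduct.assoc R M M M).symm
      (TensorProduct.map (signAction 𝒜 U.dl) U.lam (U.lam y)) :=
  calc LinearMap.rTensor M U.lam (U.lam y)
      = ksign (U.dm + (U.dl - U.dm) * k) •
          LinearMap.rTensor M (U.coprodOfCopairing U.cop ∘ₗ U.mu)
            ((TensorProduct.assoc R M M M).symm (y ⊗ₜ U.cop)) := by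
        rw [U.lam_apply_of_mem hy, map_zsmul, ← U.lam_eq_coprodOfCopairing_cop,
          LinearMap.rTensor_comp, LinearMap.comp_apply]
    _ = ksign U.dl • (TensorProduct.assoc R M M M).symm
          (TensorProduct.map (signAction 𝒜 U.dl) U.lam (U.coprodOfCopairing U.cop y)) :=
        (U.assoc_symm_map_lam_coprodOfCopairing U.cop_mem_tgrade hy).symm
    _ = _ := by rw [← U.lam_eq_coprodOfCopairing_cop]

end UnitalCoFrob

end

theorem unital_coFrobenius_coassoc_general {R : Type} [CommRing R] {M : Type} [AddCommGroup M]
    [Module R M]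
    (𝒜 : ℤ → Submodule R M) [DirectSum.Decomposition 𝒜]
    (U : UnitalCoFrob R 𝒜) :
    (LinearMap.rTensor M U.lam).comp U.lam =
      ksign U.dl • ((TensorProduct.assoc R M M M).symm.toLinearMap.comp
        ((TensorProduct.map (signAction 𝒜 U.dl) U.lam).comp U.lam)) :=
  DirectSum.decompose_lhom_ext 𝒜 fun _ => LinearMap.ext fun y =>
    U.rTensor_lam_lam_apply_of_mem y.2

/-- In a unital coFrobenius bialgebra `(A, μ, λ, η)` (graded-associative `μ`
with unit `η`, copairing `c = (-1)^{|λ||μ|+|μ|}λη`, coFrobenius relations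
`λ = (1⊗μ)(c⊗1) = (-1)^{|μ|}(μ⊗1)(1⊗c)` and symmetry `τc = (-1)^{|λ|}c`),
the coproduct `λ` is graded-coassociative: `(λ⊗1)λ = (-1)^{|λ|}(1⊗λ)λ`. -/
theorem unital_coFrobenius_coassoc {R : Type} [CommRing R] {M : Type} [AddCommGroup M]
    [Module R M] [Module.Free R M] [Module.Finite R M]
    (𝒜 : ℤ → Submodule R M) [DirectSum.Decomposition 𝒜]
    (U : UnitalCoFrob R 𝒜) :
    (LinearMap.rTensor M U.lam).comp U.lam =
      ksign U.dl • ((TensorProduct.assoc R M M M).symm.toLinearMap.comp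
        ((TensorProduct.map (signAction 𝒜 U.dl) U.lam).comp U.lam)) :=
  unital_coFrobenius_coassoc_general 𝒜 U

end GradedCoFrob
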